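/- Every minimal solution of the system A φ x = b (w.r.t. the componentwise order) is of the form X(e) for some selection e with e(i) ∈ J̄_i for all i. -/

import Mathlib

/-- The Łukasiewicz t-norm. -/
noncomputable def TL (a x : ℝ) : ℝ := max (a + x - 1) 0

/-- The candidate maximum solution `x̄` (empty min = 1, handled by the `if`). -/
noncomputable def xbar {m n : ℕ} [NeZero m] (A : Fin m → Fin n → ℝ) (b : Fin m → ℝ)
    (j : Fin n) : ℝ :=
  Finset.univ.inf' Finset.univ_nonempty
    (fun i => if b i ≤ A i j then b i + 1 - A i j else 1)

/-- `x` is a feasible solution of the system `A φ x = b`. -/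
def Feasible {m n : ℕ} [NeZero m] [NeZero n] (A : Fin m → Fin n → ℝ) (b : Fin m → ℝ)
    (x : Fin n → ℝ) : Prop :=
  (∀ j, x j ∈ Set.Icc (0:ℝ) 1) ∧
  ∀ i, Finset.univ.sup' Finset.univ_nonempty (fun j => TL (A i j) (x j)) = b i

/-- The candidate minimal point `X(e)` associated to a selection `e`
(empty max = 0, handled by the `if`). -/
noncomputable def Xe {m n : ℕ} [NeZero m] (A : Fin m → Fin n → ℝ) (b : Fin m → ℝ)
    (e : Fin m → Fin n) (j : Fin n) : ℝ :=
  Finset.univ.sup' Finset.univ_nonempty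
    (fun i => if e i = j ∧ b i ≠ 0 then b i + 1 - A i j else 0)

/-- `e` is a valid selection: `e i ∈ J̄ᵢ` for every `i`. -/
def ValidSel {m n : ℕ} [NeZero m] (A : Fin m → Fin n → ℝ) (b : Fin m → ℝ)
    (e : Fin m → Fin n) : Prop :=
  ∀ i, b i ≤ A i (e i) ∧ TL (A i (e i)) (xbar A b (e i)) = b i

/-!
Choose for every row `i` a column `e i` at which the maximum defining the `i`-th equation is
attained by `x`. For `b i ≠ 0` this forces `x (e i) = b i + 1 - A i (e i)`, so `X(e)` takes at
each coordinate either the value of `x` or `0`; hence `X(e) ≤ x`, and `X(e)` still attains every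
`b i` at `e i`, so it is feasible and minimality gives `x = X(e)`. Since `x ≤ x̄`, the attained
value `b i` is also attained by `x̄` at `e i`, i.e. `e i ∈ J̄ᵢ`.
-/

lemma TL_nonneg (a x : ℝ) : 0 ≤ TL a x :=
  le_max_right _ _

lemma TL_mono (a : ℝ) : Monotone (TL a) :=
  fun _ _ h => max_le_max (by linarith) le_rfl

lemma add_sub_one_eq_of_TL_eq {a x c : ℝ} (h : TL a x = c) (hc : c ≠ 0) : a + x - 1 = c := by
  unfold TL at h
  rcases le_total (a + x - 1) 0 with h0 | h0
  · rw [max_eq_right h0] at h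
    exact absurd h.symm hc
  · rwa [max_eq_left h0] at h

section

variable {m n : ℕ} {A : Fin m → Fin n → ℝ} {b : Fin m → ℝ} {x : Fin n → ℝ} {e : Fin m → Fin n}

lemma Xe_term_eq (he : ∀ i, TL (A i (e i)) (x (e i)) = b i) {i : Fin m} {j : Fin n}
    (hij : e i = j ∧ b i ≠ 0) : b i + 1 - A i j = x j := by
  obtain ⟨rfl, hbi⟩ := hij
  linarith [add_sub_one_eq_of_TL_eq (he i) hbi]

variable [NeZero m]

lemma TL_xbar_le (hb : ∀ i, 0 ≤ b i) (i : Fin m) (j : Fin n) : TL (A i j) (xbar A b j) ≤ b i := by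
  have hinf : xbar A b j ≤ if b i ≤ A i j then b i + 1 - A i j else 1 :=
    Finset.inf'_le _ (Finset.mem_univ i)
  refine max_le ?_ (hb i)
  split_ifs at hinf with h
  · linarith
  · linarith [not_le.mp h]

lemma le_Xe {i : Fin m} (hbi : b i ≠ 0) : b i + 1 - A i (e i) ≤ Xe A b e (e i) := by
  refine le_trans ?_ (Finset.le_sup' _ (Finset.mem_univ i))
  simp [hbi]

lemma Xe_le (he : ∀ i, TL (A i (e i)) (x (e i)) = b i) (hx : ∀ j, 0 ≤ x j) (j : Fin n) :
    Xe A b e j ≤ x j := by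
  refine Finset.sup'_le _ _ fun i _ => ?_
  split_ifs with hij
  · exact (Xe_term_eq he hij).le
  · exact hx j

lemma Xe_nonneg (he : ∀ i, TL (A i (e i)) (x (e i)) = b i) (hx : ∀ j, 0 ≤ x j) (j : Fin n) :
    0 ≤ Xe A b e j := by
  obtain ⟨i⟩ := (inferInstance : Nonempty (Fin m))
  refine le_trans ?_ (Finset.le_sup' _ (Finset.mem_univ i))
  split_ifs with hij
  · exact (Xe_term_eq he hij).ge.trans' (hx j)
  · exact le_rfl

variable [NeZero n]

namespace Feasible

lemma TL_le (hx : Feasible A b x) (i : Fin m) (j : Fin n) : TL (A i j) (x j) ≤ b i :=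
  hx.2 i ▸ Finset.le_sup' (fun j => TL (A i j) (x j)) (Finset.mem_univ j)

lemma rhs_nonneg (hx : Feasible A b x) (i : Fin m) : 0 ≤ b i :=
  (TL_nonneg _ _).trans (hx.TL_le i ⟨0, Nat.pos_of_neZero n⟩)

lemma exists_TL_eq (hx : Feasible A b x) (i : Fin m) : ∃ j, TL (A i j) (x j) = b i := by
  obtain ⟨j, -, hj⟩ := Finset.exists_mem_eq_sup' Finset.univ_nonempty (fun j => TL (A i j) (x j))
  exact ⟨j, hj ▸ hx.2 i⟩

lemma le_xbar (hx : Feasible A b x) (j : Fin n) : x j ≤ xbar A b j := by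
  refine Finset.le_inf' _ _ fun i _ => ?_
  split_ifs
  · linarith [(le_max_left _ _).trans (hx.TL_le i j)]
  · exact (hx.1 j).2

lemma of_le (hx : Feasible A b x) {y : Fin n → ℝ} (hy0 : ∀ j, 0 ≤ y j) (hyx : ∀ j, y j ≤ x j)
    (hattain : ∀ i, ∃ j, b i ≤ TL (A i j) (y j)) : Feasible A b y := by
  refine ⟨fun j => ⟨hy0 j, (hyx j).trans (hx.1 j).2⟩, fun i => le_antisymm ?_ ?_⟩
  · exact Finset.sup'_le _ _ fun j _ => (TL_mono _ (hyx j)).trans (hx.TL_le i j)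
  · obtain ⟨j, hj⟩ := hattain i
    exact hj.trans (Finset.le_sup' (fun j => TL (A i j) (y j)) (Finset.mem_univ j))

lemma feasible_Xe (hx : Feasible A b x) (he : ∀ i, TL (A i (e i)) (x (e i)) = b i) :
    Feasible A b (Xe A b e) := by
  have hx0 : ∀ j, 0 ≤ x j := fun j => (hx.1 j).1
  refine hx.of_le (Xe_nonneg he hx0) (Xe_le he hx0) fun i => ⟨e i, ?_⟩
  rcases eq_or_ne (b i) 0 with hbi | hbi
  · exact hbi ▸ TL_nonneg _ _
  · exact (le_max_left _ _).trans' (by linarith [le_Xe (A := A) (e := e) hbi])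

lemma validSel (hx : Feasible A b x) (hA : ∀ i j, 0 ≤ A i j)
    (he : ∀ i, TL (A i (e i)) (x (e i)) = b i) : ValidSel A b e := by
  intro i
  refine ⟨?_, le_antisymm (TL_xbar_le hx.rhs_nonneg i (e i)) ?_⟩
  · rcases eq_or_ne (b i) 0 with hbi | hbi
    · exact hbi ▸ hA i (e i)
    · linarith [add_sub_one_eq_of_TL_eq (he i) hbi, (hx.1 (e i)).2]
  · exact he i ▸ TL_mono _ (hx.le_xbar (e i))

end Feasible

end

theorem stmt_14_general (m n : ℕ) [NeZero m] [NeZero n] (A : Fin m → Fin n → ℝ) (b : Fin m → ℝ)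
    (hA : ∀ i j, A i j ∈ Set.Icc (0:ℝ) 1)
    (x : Fin n → ℝ) (hx : Feasible A b x)
    (hmin : ∀ y, Feasible A b y → (∀ j, y j ≤ x j) → y = x) :
    ∃ e : Fin m → Fin n, ValidSel A b e ∧ x = Xe A b e := by
  choose e he using hx.exists_TL_eq
  refine ⟨e, hx.validSel (fun i j => (hA i j).1) he, (hmin _ (hx.feasible_Xe he) ?_).symm⟩
  exact Xe_le he fun j => (hx.1 j).1

theorem stmt_14 (m n : ℕ) [NeZero m] [NeZero n] (A : Fin m → Fin n → ℝ) (b : Fin m → ℝ)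
    (hA : ∀ i j, A i j ∈ Set.Icc (0:ℝ) 1) (hb : ∀ i, b i ∈ Set.Icc (0:ℝ) 1)
    (x : Fin n → ℝ) (hx : Feasible A b x)
    (hmin : ∀ y, Feasible A b y → (∀ j, y j ≤ x j) → y = x) :
    ∃ e : Fin m → Fin n, ValidSel A b e ∧ x = Xe A b e :=
  stmt_14_general m n A b hA x hx hmin
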